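/- For every tree T and every cycle C_n (n ≥ 3), the cut monoids M_T and M_{C_n} are normal. -/

import Mathlib

/-! Basic definitions for cut monoids of finite simple graphs. -/

open Classical in
/-- The cut vector of a vertex set `A`, as a function on `Sym2 V`:
value `1` on pairs with exactly one element in `A`, and `0` otherwise. -/
noncomputable def cutVec {V : Type} (A : Set V) : Sym2 V → ℤ :=
  Sym2.lift ⟨fun v w => if ((v ∈ A) ↔ (w ∈ A)) then 0 else 1,
    fun v w => if_congr iff_comm rfl rfl⟩

variable {V : Type}

/-- The generators `(δ_A, 1)` of the cut monoid of `G`. -/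
def cutGens (G : SimpleGraph V) : Set ((G.edgeSet → ℤ) × ℤ) :=
  {p | ∃ A : Set V, p = (fun e => cutVec A e.1, 1)}

/-- The cut monoid `M_G` of a graph `G`. -/
def cutMonoid (G : SimpleGraph V) : AddSubmonoid ((G.edgeSet → ℤ) × ℤ) :=
  AddSubmonoid.closure (cutGens G)

/-- The group `gp(M_G)` generated by the cut monoid. -/
def cutGroup (G : SimpleGraph V) : AddSubgroup ((G.edgeSet → ℤ) × ℤ) :=
  AddSubgroup.closure (cutGens G)

/-- `M_G` is normal: every `x ∈ gp(M_G)` with `n • x ∈ M_G` for some `n ≥ 1` lies in `M_G`. -/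
def CutNormal (G : SimpleGraph V) : Prop :=
  ∀ x ∈ cutGroup G, (∃ n : ℕ, 1 ≤ n ∧ n • x ∈ cutMonoid G) → x ∈ cutMonoid G

/-- `M_G` is seminormal: every `x ∈ gp(M_G)` with `2 • x ∈ M_G` and `3 • x ∈ M_G`
lies in `M_G`. -/
def CutSeminormal (G : SimpleGraph V) : Prop :=
  ∀ x ∈ cutGroup G, 2 • x ∈ cutMonoid G → 3 • x ∈ cutMonoid G → x ∈ cutMonoid G

/-- Generators of the cone of `M_G`: nonnegative real multiples of the `(δ_A, 1)`. -/
noncomputable def cutConeGens (G : SimpleGraph V) : Set ((G.edgeSet → ℝ) × ℝ) :=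
  {q | ∃ (c : ℝ) (A : Set V), 0 ≤ c ∧
    q = c • ((fun e => ((cutVec A e.1 : ℤ) : ℝ), (1 : ℝ)))}

/-- The cone `cone(M_G)`: all finite nonnegative real combinations of the `(δ_A, 1)`. -/
noncomputable def cutCone (G : SimpleGraph V) : Set ((G.edgeSet → ℝ) × ℝ) :=
  (AddSubmonoid.closure (cutConeGens G) : Set ((G.edgeSet → ℝ) × ℝ))

/-- The canonical map from `ℤ^E × ℤ` to `ℝ^E × ℝ`. -/
noncomputable def toRealCut (G : SimpleGraph V) (p : (G.edgeSet → ℤ) × ℤ) :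
    (G.edgeSet → ℝ) × ℝ :=
  (fun e => ((p.1 e : ℤ) : ℝ), ((p.2 : ℤ) : ℝ))

/-- `int(M_G)`: elements of `M_G` mapping into the topological interior of `cone(M_G)`. -/
noncomputable def cutInterior (G : SimpleGraph V) : Set ((G.edgeSet → ℤ) × ℤ) :=
  {p | p ∈ cutMonoid G ∧ toRealCut G p ∈ interior (cutCone G)}

/-- The set of last coordinates `α ∈ ℕ` realized by elements of `int(M_G)`;
its least element is `m(G)`. -/
noncomputable def cutDegrees (G : SimpleGraph V) : Set ℕ :=
  {α | ∃ x : G.edgeSet → ℤ, ((x, (α : ℤ)) : (G.edgeSet → ℤ) × ℤ) ∈ cutInterior G}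

/-- `H` is a minor of `G`: branch sets `B u` are nonempty, pairwise disjoint,
induce connected subgraphs, and edges of `H` are witnessed by edges of `G`. -/
def GraphMinor {W V : Type} (H : SimpleGraph W) (G : SimpleGraph V) : Prop :=
  ∃ B : W → Set V,
    (∀ u, (B u).Nonempty) ∧
    (∀ u v, u ≠ v → Disjoint (B u) (B v)) ∧
    (∀ u, (G.induce (B u)).Connected) ∧
    (∀ u v, H.Adj u v → ∃ a ∈ B u, ∃ b ∈ B v, G.Adj a b)

/-- `G` is `K₅`-minor-free. -/
def K5Free (G : SimpleGraph V) : Prop :=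
  ¬ GraphMinor (⊤ : SimpleGraph (Fin 5)) G

/-- `G` is bipartite: vertices split into two parts so every edge joins the parts. -/
def BipartiteG (G : SimpleGraph V) : Prop :=
  ∃ s : Set V, ∀ ⦃v w⦄, G.Adj v w → ((v ∈ s ∧ w ∉ s) ∨ (w ∈ s ∧ v ∉ s))

/-- `G` has an induced cycle of length `n` (n ≥ 3): an induced-subgraph copy of the
cycle graph of length `n`. -/
def HasInducedCycleLen (G : SimpleGraph V) (n : ℕ) : Prop :=
  3 ≤ n ∧ Nonempty (SimpleGraph.cycleGraph n ↪g G)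

/-- `G` contains a triangle. -/
def HasTriangle (G : SimpleGraph V) : Prop :=
  ∃ a b c, G.Adj a b ∧ G.Adj b c ∧ G.Adj a c

/-- `G` is chordal: every induced cycle is a triangle. -/
def ChordalG (G : SimpleGraph V) : Prop :=
  ∀ n, HasInducedCycleLen G n → n = 3

/-- `G` is bridgeless: every edge lies on some cycle. -/
def BridgelessG (G : SimpleGraph V) : Prop :=
  ∀ e ∈ G.edgeSet, ∃ (v : V) (c : G.Walk v v), c.IsCycle ∧ e ∈ c.edges

/-- `G` is (isomorphic to) a cycle of length `n`. -/
def IsCycleOfLen (G : SimpleGraph V) (n : ℕ) : Prop :=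
  3 ≤ n ∧ Nonempty (G ≃g SimpleGraph.cycleGraph n)

/-- `G` is a cycle. -/
def IsCycleGraph (G : SimpleGraph V) : Prop :=
  ∃ n, IsCycleOfLen G n

/-- `G` is a `0`-sum of `G1` and `G2`: copies of `G1`, `G2` cover `G`,
overlap in exactly one vertex, and every edge comes from `G1` or `G2`. -/
def IsZeroSumDecomp {V1 V2 : Type} (G : SimpleGraph V) (G1 : SimpleGraph V1)
    (G2 : SimpleGraph V2) : Prop :=
  ∃ (f1 : V1 ↪ V) (f2 : V2 ↪ V),
    Set.range f1 ∪ Set.range f2 = Set.univ ∧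
    (∃ v, Set.range f1 ∩ Set.range f2 = {v}) ∧
    (∀ a b, G.Adj a b ↔
      ((∃ x y, f1 x = a ∧ f1 y = b ∧ G1.Adj x y) ∨
       (∃ x y, f2 x = a ∧ f2 y = b ∧ G2.Adj x y)))

/-- `G` is a `1`-sum of `G1` and `G2` along a common edge. -/
def IsOneSumDecomp {V1 V2 : Type} (G : SimpleGraph V) (G1 : SimpleGraph V1)
    (G2 : SimpleGraph V2) : Prop :=
  ∃ (f1 : V1 ↪ V) (f2 : V2 ↪ V) (v w : V),
    v ≠ w ∧
    Set.range f1 ∪ Set.range f2 = Set.univ ∧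
    Set.range f1 ∩ Set.range f2 = {v, w} ∧
    (∃ x y, f1 x = v ∧ f1 y = w ∧ G1.Adj x y) ∧
    (∃ x y, f2 x = v ∧ f2 y = w ∧ G2.Adj x y) ∧
    (∀ a b, G.Adj a b ↔
      ((∃ x y, f1 x = a ∧ f1 y = b ∧ G1.Adj x y) ∨
       (∃ x y, f2 x = a ∧ f2 y = b ∧ G2.Adj x y)))

/-- Ring graphs: obtained, up to adding isolated vertices, from finitely many
(finite) trees and cycles by iterated `0`-sums and `1`-sums. -/
inductive IsRingGraph : {V : Type} → SimpleGraph V → Prop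
  | tree {V : Type} (G : SimpleGraph V) :
      Finite V → G.Connected → G.IsAcyclic → IsRingGraph G
  | cycle {V : Type} (G : SimpleGraph V) : IsCycleGraph G → IsRingGraph G
  | zeroSum {V1 V2 V : Type} {G1 : SimpleGraph V1} {G2 : SimpleGraph V2}
      {G : SimpleGraph V} :
      IsRingGraph G1 → IsRingGraph G2 → IsZeroSumDecomp G G1 G2 → IsRingGraph G
  | oneSum {V1 V2 V : Type} {G1 : SimpleGraph V1} {G2 : SimpleGraph V2}
      {G : SimpleGraph V} :
      IsRingGraph G1 → IsRingGraph G2 → IsOneSumDecomp G G1 G2 → IsRingGraph G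
  | addIsolated {V W : Type} {G : SimpleGraph V} {H : SimpleGraph W} (f : V ↪ W) :
      IsRingGraph G → (∀ a b, H.Adj a b ↔ ∃ x y, f x = a ∧ f y = b ∧ G.Adj x y) →
      IsRingGraph H

/-- An edge of an induced subgraph is an edge of the ambient graph. -/
lemma induce_edge_mem (G : SimpleGraph V) (s : Set V) (e : Sym2 s)
    (he : e ∈ (G.induce s).edgeSet) : e.map Subtype.val ∈ G.edgeSet := by
  induction e using Sym2.ind with
  | _ a b =>
    rw [Sym2.map_pair_eq, SimpleGraph.mem_edgeSet]
    exact he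

/-- Restriction of a vector indexed by the edges of `G` to the edges of the
subgraph of `G` induced on `s`. -/
noncomputable def restrictCut (G : SimpleGraph V) (s : Set V) (p : G.edgeSet → ℤ) :
    (G.induce s).edgeSet → ℤ :=
  fun e => p ⟨e.1.map Subtype.val, induce_edge_mem G s e.1 e.2⟩

/-!
Both monoids are cut out of their groups by finitely many linear inequalities that hold on the
generators; such a monoid is normal, because the inequalities survive division by a positive
integer.

In a tree every set of edges is a cut, so `M_T` is the set of all `(x, k)` with `0 ≤ x ≤ k`:
such a point is the sum of the `k` layer cuts `{e | j < x e}`.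

In `Cₙ` the cuts are exactly the even sets of edges, and `M_{Cₙ}` is described by `0 ≤ x ≤ k`,
the inequalities `2 ∑_{e ∈ F} x e ≤ ∑ x + (#F - 1) k` for odd `F`, and the parity of `∑ x`,
which holds on the whole group. A solution is a `k × n` zero-one matrix with column sums `x`
and even rows. It is built column by column: the first two columns are replaced by their
symmetric difference, whose size can be chosen so that the smaller system still satisfies the
inequalities.
-/

open Finset

open Classical in
lemma cutVec_mk (A : Set V) (v w : V) :
    cutVec A s(v, w) = if (v ∈ A ↔ w ∈ A) then 0 else 1 := by
  simp [cutVec]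

lemma cutVec_nonneg (A : Set V) (e : Sym2 V) : 0 ≤ cutVec A e := by
  induction e using Sym2.ind with
  | _ v w => rw [cutVec_mk]; split <;> norm_num

lemma cutVec_le_one (A : Set V) (e : Sym2 V) : cutVec A e ≤ 1 := by
  induction e using Sym2.ind with
  | _ v w => rw [cutVec_mk]; split <;> norm_num

lemma cutVec_setOf_eq_one (g : V → ZMod 2) (v w : V) :
    cutVec {x | g x = 1} s(v, w) = ((g v + g w).val : ℤ) := by
  have h01 : ∀ c : ZMod 2, c = 0 ∨ c = 1 := by decide
  rw [cutVec_mk, Set.mem_ofPred_eq, Set.mem_ofPred_eq]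
  rcases h01 (g v) with ha | ha <;> rcases h01 (g w) with hb | hb <;> simp [ha, hb] <;> rfl

open Classical in
lemma cutVec_cast_zmod (A : Set V) (v w : V) :
    ((cutVec A s(v, w) : ℤ) : ZMod 2) =
      (if v ∈ A then 1 else 0) + (if w ∈ A then 1 else 0) := by
  rw [cutVec_mk]
  by_cases hv : v ∈ A <;> by_cases hw : w ∈ A <;> simp [hv, hw]; decide

section Normality

variable {G : SimpleGraph V}

def edgeCoord (e : G.edgeSet) : (G.edgeSet → ℤ) × ℤ →+ ℤ :=
  AddMonoidHom.mk' (fun p => p.1 e) fun _ _ => rfl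

def edgeSlack (e : G.edgeSet) : (G.edgeSet → ℤ) × ℤ →+ ℤ :=
  AddMonoidHom.mk' (fun p => p.2 - p.1 e) fun p q => by
    simp only [Prod.fst_add, Prod.snd_add, Pi.add_apply]
    ring

def boxForms (G : SimpleGraph V) : Set ((G.edgeSet → ℤ) × ℤ →+ ℤ) :=
  insert (AddMonoidHom.snd _ _) (Set.range edgeCoord ∪ Set.range edgeSlack)

lemma forall_boxForms_nonneg_iff {p : (G.edgeSet → ℤ) × ℤ} :
    (∀ φ ∈ boxForms G, 0 ≤ φ p) ↔ 0 ≤ p.2 ∧ ∀ e, 0 ≤ p.1 e ∧ p.1 e ≤ p.2 := by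
  simp only [boxForms, Set.forall_mem_insert, Set.mem_union, or_imp, forall_and,
    Set.forall_mem_range, edgeCoord, edgeSlack, AddMonoidHom.mk'_apply, AddMonoidHom.coe_snd,
    sub_nonneg]

lemma boxForms_nonneg_of_mem_cutGens {g : (G.edgeSet → ℤ) × ℤ} (hg : g ∈ cutGens G) :
    ∀ φ ∈ boxForms G, 0 ≤ φ g := by
  obtain ⟨A, rfl⟩ := hg
  exact forall_boxForms_nonneg_iff.mpr
    ⟨zero_le_one, fun e => ⟨cutVec_nonneg A _, cutVec_le_one A _⟩⟩

lemma nonneg_of_mem_cutMonoid (φ : (G.edgeSet → ℤ) × ℤ →+ ℤ)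
    (hφ : ∀ g ∈ cutGens G, 0 ≤ φ g) {p : (G.edgeSet → ℤ) × ℤ} (hp : p ∈ cutMonoid G) :
    0 ≤ φ p := by
  induction hp using AddSubmonoid.closure_induction with
  | mem g hg => exact hφ g hg
  | zero => simp
  | add q r _ _ hq hr => rw [map_add]; exact add_nonneg hq hr

theorem cutNormal_of_forms (Φ : Set ((G.edgeSet → ℤ) × ℤ →+ ℤ))
    (hgen : ∀ φ ∈ Φ, ∀ g ∈ cutGens G, 0 ≤ φ g)
    (hmem : ∀ p ∈ cutGroup G, (∀ φ ∈ Φ, 0 ≤ φ p) → p ∈ cutMonoid G) :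
    CutNormal G := by
  rintro x hx ⟨n, hn, hnx⟩
  refine hmem x hx fun φ hφ => ?_
  have h := nonneg_of_mem_cutMonoid φ (hgen φ hφ) hnx
  rw [map_nsmul, nsmul_eq_mul] at h
  exact nonneg_of_mul_nonneg_right h (by exact_mod_cast hn)

lemma mem_cutMonoid_of_eq_sum {κ : Type} [Fintype κ] (A : κ → Set V)
    {p : (G.edgeSet → ℤ) × ℤ} (h₁ : ∀ e, p.1 e = ∑ j, cutVec (A j) e)
    (h₂ : p.2 = Fintype.card κ) : p ∈ cutMonoid G := by
  have hp : p = ∑ j, ((fun e : G.edgeSet => cutVec (A j) e), (1 : ℤ)) := by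
    ext e
    · simp [h₁, Prod.fst_sum]
    · simp [h₂, Prod.snd_sum]
  rw [hp]
  exact sum_mem fun j _ => AddSubmonoid.subset_closure ⟨A j, rfl⟩

end Normality

section Tree

variable {G : SimpleGraph V}

/-- Sum the labels along the unique path from a fixed root: in a tree, the paths to the two
ends of an edge differ exactly by that edge. -/
lemma SimpleGraph.IsAcyclic.exists_potential (ha : G.IsAcyclic) (hc : G.Connected)
    (f : Sym2 V → ZMod 2) : ∃ g : V → ZMod 2, ∀ v w, G.Adj v w → g v + g w = f s(v, w) := by
  classical
  obtain ⟨r⟩ := hc.nonempty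
  let P : ∀ v, G.Path r v := fun v => (hc r v).some.toPath
  have hsum : ∀ {v w} (h : G.Adj v w) (q : G.Walk r v),
      ((q.concat h).edges.map f).sum = (q.edges.map f).sum + f s(v, w) := by
    intro v w h q
    simp [SimpleGraph.Walk.edges_concat]
  have hchar : ∀ a c : ZMod 2, a + (a + c) = c := by decide
  refine ⟨fun v => ((P v).1.edges.map f).sum, fun v w hadj => ?_⟩
  show ((P v).1.edges.map f).sum + ((P w).1.edges.map f).sum = f s(v, w)
  by_cases hv : v ∈ (P w).1.support
  · rw [ha.path_concat (P v).2 (P w).2 hadj hv, hsum, hchar]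
  · have hw := ha.mem_support_of_ne_mem_support_of_adj_of_isPath (P v).2 (P w).2 hadj hv
    rw [ha.path_concat (P w).2 (P v).2 hadj.symm hw, hsum, add_comm, hchar, Sym2.eq_swap]

lemma SimpleGraph.IsAcyclic.exists_cutVec_eq (ha : G.IsAcyclic) (hc : G.Connected)
    (T : Set G.edgeSet) [DecidablePred (· ∈ T)] :
    ∃ A : Set V, ∀ e : G.edgeSet, cutVec A e = if e ∈ T then 1 else 0 := by
  classical
  obtain ⟨g, hg⟩ := ha.exists_potential hc fun e =>
    if he : e ∈ G.edgeSet then if ⟨e, he⟩ ∈ T then 1 else 0 else 0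
  refine ⟨{x | g x = 1}, fun ⟨e, he⟩ => ?_⟩
  induction e using Sym2.ind with
  | _ v w =>
    rw [cutVec_setOf_eq_one, hg v w he, dif_pos he]
    split_ifs <;> rfl

lemma sum_ite_lt_eq (K : ℕ) {z : ℤ} (h₀ : 0 ≤ z) (hK : z ≤ K) :
    ∑ j : Fin K, (if (j : ℤ) < z then 1 else 0 : ℤ) = z := by
  lift z to ℕ using h₀
  rw [Fin.sum_univ_eq_sum_range (fun j => if (j : ℤ) < z then (1 : ℤ) else 0), sum_boole]
  have : (range K).filter (fun j : ℕ => (j : ℤ) < z) = range z := by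
    ext j; simp only [mem_filter, mem_range]; omega
  rw [this, card_range]

lemma SimpleGraph.IsAcyclic.mem_cutMonoid (ha : G.IsAcyclic) (hc : G.Connected)
    {p : (G.edgeSet → ℤ) × ℤ} (h₂ : 0 ≤ p.2) (h₁ : ∀ e, 0 ≤ p.1 e ∧ p.1 e ≤ p.2) :
    p ∈ cutMonoid G := by
  classical
  lift p.2 to ℕ using h₂ with k hk
  choose A hA using fun j : Fin k => ha.exists_cutVec_eq hc {e | (j : ℤ) < p.1 e}
  refine mem_cutMonoid_of_eq_sum A (fun e => ?_) (by simp [hk])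
  simp only [hA, Set.mem_ofPred_eq]
  rw [sum_ite_lt_eq k (h₁ e).1 (hk ▸ (h₁ e).2)]

theorem SimpleGraph.IsAcyclic.cutNormal (ha : G.IsAcyclic) (hc : G.Connected) : CutNormal G :=
  cutNormal_of_forms (boxForms G) (fun _ hφ _ hg => boxForms_nonneg_of_mem_cutGens hg _ hφ)
    fun _ _ hp =>
      let ⟨h₂, h₁⟩ := forall_boxForms_nonneg_iff.mp hp
      ha.mem_cutMonoid hc h₂ h₁

end Tree

section EvenRows

open scoped symmDiff

variable {ι κ : Type*} [DecidableEq ι]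

lemma Finset.two_mul_card_inter_lt_of_odd_of_even {s t : Finset ι} (hs : Odd #s) (ht : Even #t) :
    2 * #(s ∩ t) < #s + #t := by
  have hne : s ≠ t := by rintro rfl; exact Nat.not_even_iff_odd.mpr hs ht
  by_contra! h
  have h₁ : s ∩ t = s := eq_of_subset_of_card_le inter_subset_left (by
    have := card_le_card (inter_subset_right (s₁ := s) (s₂ := t)); omega)
  have h₂ : s ∩ t = t := eq_of_subset_of_card_le inter_subset_right (by
    have := card_le_card (inter_subset_left (s₁ := s) (s₂ := t)); omega)
  exact hne (h₁.symm.trans h₂)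

lemma two_mul_sum_le_of_odd [Fintype ι] {y : ι → ℤ} (hy : ∀ i, y i = 0 ∨ y i = 1)
    (heven : Even (∑ i, y i)) {F : Finset ι} (hF : Odd #F) :
    2 * ∑ i ∈ F, y i ≤ ∑ i, y i + #F - 1 := by
  classical
  set S := univ.filter (y · = 1)
  have hyS : ∀ i, y i = if i ∈ S then 1 else 0 := fun i => by
    rcases hy i with h | h <;> simp [S, h]
  simp only [hyS, sum_boole, filter_mem_eq_inter, univ_inter, Int.even_coe_nat] at heven ⊢
  have := two_mul_card_inter_lt_of_odd_of_even hF heven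
  omega

lemma Finset.exists_card_eq_card_symmDiff_eq [Fintype κ] [DecidableEq κ] (D : Finset κ)
    {b d : ℤ} (hpar : Even (d + #D + b)) (h₁ : b - #D ≤ d) (h₂ : #D - b ≤ d)
    (h₃ : d ≤ #D + b) (h₄ : d ≤ 2 * Fintype.card κ - #D - b) :
    ∃ B : Finset κ, (#B : ℤ) = b ∧ (#(D ∆ B) : ℤ) = d := by
  obtain ⟨t, ht⟩ := hpar
  have hDc : #Dᶜ + #D = Fintype.card κ := by rw [card_compl]; have := card_le_univ D; omega
  -- `B` keeps `#D + b - t` elements of `D` and adds `t - #D` elements outside `D`.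
  obtain ⟨P, hPD, hP⟩ := exists_subset_card_eq (s := D) (n := (#D + b - t).toNat) (by omega)
  obtain ⟨Q, hQD, hQ⟩ := exists_subset_card_eq (s := Dᶜ) (n := (t - #D).toNat) (by omega)
  have hPQ : Disjoint P Q :=
    disjoint_of_subset_left hPD (disjoint_of_subset_right hQD disjoint_compl_right)
  have hDPQ : Disjoint (D \ P) Q :=
    disjoint_of_subset_left sdiff_subset (disjoint_of_subset_right hQD disjoint_compl_right)
  have hsymm : D ∆ (P ∪ Q) = (D \ P) ∪ Q := by
    ext j
    have := @hPD j
    have := @hQD j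
    simp only [mem_symmDiff, mem_union, mem_sdiff, mem_compl] at *
    tauto
  refine ⟨P ∪ Q, ?_, ?_⟩
  · rw [card_union_of_disjoint hPQ]; omega
  · rw [hsymm, card_union_of_disjoint hDPQ, card_sdiff_of_subset hPD]
    have := card_le_card hPD
    omega

/-- A system of `k` rows and columns `s ∪ {∗}` of sizes `x` and `x₀`: the odd-set
inequalities `2 ∑_F x ≤ ∑ x + (#F - 1) k` appear split by whether `∗ ∈ F`, in which case the
rest of `F` is even. -/
def ParityFeasible (k x₀ : ℤ) (x : ι → ℤ) (s : Finset ι) : Prop :=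
  (∀ i ∈ s, 0 ≤ x i ∧ x i ≤ k) ∧ Even (x₀ + ∑ i ∈ s, x i) ∧
    (∀ F ⊆ s, Odd #F → 2 * ∑ i ∈ F, x i ≤ x₀ + ∑ i ∈ s, x i + ((#F : ℤ) - 1) * k) ∧
    ∀ F ⊆ s, Even #F → 2 * x₀ + 2 * ∑ i ∈ F, x i ≤ x₀ + ∑ i ∈ s, x i + #F * k

variable {k x₀ : ℤ} {x : ι → ℤ} {s : Finset ι} {a : ι}

lemma ParityFeasible.bounds_of_insert (h : ParityFeasible k x₀ x (insert a s)) (ha : a ∉ s)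
    {F : Finset ι} (hF : F ⊆ s) :
    (Odd #F → 2 * ∑ i ∈ F, x i ≤ x₀ + x a + ∑ i ∈ s, x i + ((#F : ℤ) - 1) * k) ∧
    (Even #F → 2 * x a + 2 * ∑ i ∈ F, x i ≤ x₀ + x a + ∑ i ∈ s, x i + #F * k) ∧
    (Even #F → 2 * x₀ + 2 * ∑ i ∈ F, x i ≤ x₀ + x a + ∑ i ∈ s, x i + #F * k) ∧
    (Odd #F → 2 * x₀ + 2 * x a + 2 * ∑ i ∈ F, x i
      ≤ x₀ + x a + ∑ i ∈ s, x i + ((#F : ℤ) + 1) * k) := by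
  obtain ⟨-, -, hodd, heven⟩ := h
  have haF : a ∉ F := fun h => ha (hF h)
  have hF' : F ⊆ insert a s := hF.trans (subset_insert a s)
  have haF' : insert a F ⊆ insert a s := insert_subset_insert a hF
  rw [sum_insert ha, ← add_assoc] at hodd heven
  refine ⟨hodd F hF', fun hFe => ?_, heven F hF', fun hFo => ?_⟩
  · have := hodd _ haF' (by rw [card_insert_of_notMem haF]; exact hFe.add_one)
    rw [sum_insert haF, card_insert_of_notMem haF] at this
    push_cast at this
    linarith
  · have := heven _ haF' (by rw [card_insert_of_notMem haF]; exact hFo.add_one)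
    rw [sum_insert haF, card_insert_of_notMem haF] at this
    push_cast at this
    linarith

/-- Lower bounds on the size `d` of the column that replaces `a` and `∗`. -/
def mergeLower (k x₀ : ℤ) (x : ι → ℤ) (s : Finset ι) (a : ι) : Finset ℤ :=
  {x a - x₀, x₀ - x a} ∪ (s.powerset.filter (Odd ·.card)).image
    fun F => 2 * ∑ i ∈ F, x i - ∑ i ∈ s, x i - ((#F : ℤ) - 1) * k

def mergeUpper (k x₀ : ℤ) (x : ι → ℤ) (s : Finset ι) (a : ι) : Finset ℤ :=
  {x₀ + x a, 2 * k - x₀ - x a} ∪ (s.powerset.filter (Even ·.card)).image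
    fun F => ∑ i ∈ s, x i + #F * k - 2 * ∑ i ∈ F, x i

lemma ParityFeasible.le_of_mem_mergeLower_of_mem_mergeUpper
    (h : ParityFeasible k x₀ x (insert a s)) (ha : a ∉ s) (hx₀ : 0 ≤ x₀) (hx₀k : x₀ ≤ k)
    {l u : ℤ} (hl : l ∈ mergeLower k x₀ x s a) (hu : u ∈ mergeUpper k x₀ x s a) : l ≤ u := by
  have hbox : ∀ i ∈ s, 0 ≤ x i ∧ x i ≤ k := fun i hi => h.1 i (mem_insert_of_mem hi)
  obtain ⟨hxa, hxak⟩ := h.1 a (mem_insert_self a s)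
  simp only [mergeLower, mergeUpper, mem_union, mem_insert, mem_singleton, mem_image,
    mem_filter, mem_powerset] at hl hu
  rcases hl with (rfl | rfl) | ⟨F, ⟨hF, hFo⟩, rfl⟩ <;>
    rcases hu with (rfl | rfl) | ⟨G, ⟨hG, hGe⟩, rfl⟩
  · linarith
  · linarith
  · linarith [(h.bounds_of_insert ha hG).2.1 hGe]
  · linarith
  · linarith
  · linarith [(h.bounds_of_insert ha hG).2.2.1 hGe]
  · linarith [(h.bounds_of_insert ha hF).1 hFo]
  · linarith [(h.bounds_of_insert ha hF).2.2.2 hFo]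
  -- odd `F` against even `G`: bound `∑_{F ∪ G} x` by `∑_s x` and `∑_{F ∩ G} x` by `#(F ∩ G) k`
  · have hcard : (2 * #(F ∩ G) : ℤ) + 1 ≤ #F + #G := by
      exact_mod_cast two_mul_card_inter_lt_of_odd_of_even hFo hGe
    have := sum_union_inter (s₁ := F) (s₂ := G) (f := x)
    have := sum_le_sum_of_subset_of_nonneg (union_subset hF hG) fun i hi _ => (hbox i hi).1
    have := sum_le_card_nsmul (F ∩ G) x k fun i hi => (hbox i (hF (mem_inter.mp hi).1)).2
    have : (2 * #(F ∩ G) : ℤ) * k ≤ ((#F : ℤ) + #G - 1) * k :=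
      mul_le_mul_of_nonneg_right (by linarith) (by linarith)
    simp only [nsmul_eq_mul] at *
    linarith

lemma ParityFeasible.even_of_mem_mergeLower (h : ParityFeasible k x₀ x (insert a s))
    (ha : a ∉ s) {l : ℤ} (hl : l ∈ mergeLower k x₀ x s a) : Even (l + x₀ + x a) := by
  obtain ⟨t, ht⟩ := h.2.1
  rw [sum_insert ha] at ht
  simp only [mergeLower, mem_union, mem_insert, mem_singleton, mem_image, mem_filter,
    mem_powerset] at hl
  rcases hl with (rfl | rfl) | ⟨F, ⟨-, ⟨r, hr⟩⟩, rfl⟩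
  · exact ⟨x a, by ring⟩
  · exact ⟨x₀, by ring⟩
  · exact ⟨∑ i ∈ F, x i - r * k + x₀ + x a - t, by rw [hr]; push_cast; linarith⟩

/-- The merged column takes the largest lower bound as its size. -/
lemma ParityFeasible.exists_merge (h : ParityFeasible k x₀ x (insert a s)) (ha : a ∉ s)
    (hx₀ : 0 ≤ x₀) (hx₀k : x₀ ≤ k) :
    ∃ d, Even (d + x₀ + x a) ∧ x a - x₀ ≤ d ∧ x₀ - x a ≤ d ∧ d ≤ x₀ + x a ∧
      d ≤ 2 * k - x₀ - x a ∧ ParityFeasible k d x s := by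
  set lo := mergeLower k x₀ x s a
  have hlo : lo.Nonempty := ⟨x a - x₀, by simp [lo, mergeLower]⟩
  have hd : lo.max' hlo ∈ lo := max'_mem lo hlo
  have hd_lo : ∀ l ∈ lo, l ≤ lo.max' hlo := fun l hl => le_max' lo l hl
  have hd_up : ∀ u ∈ mergeUpper k x₀ x s a, lo.max' hlo ≤ u := fun u hu =>
    h.le_of_mem_mergeLower_of_mem_mergeUpper ha hx₀ hx₀k hd hu
  have hpar := h.even_of_mem_mergeLower ha hd
  refine ⟨lo.max' hlo, hpar, hd_lo _ (by simp [lo, mergeLower]),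
    hd_lo _ (by simp [lo, mergeLower]), hd_up _ (by simp [mergeUpper]),
    hd_up _ (by simp [mergeUpper]), fun i hi => h.1 i (mem_insert_of_mem hi), ?_,
    fun F hF hFo => ?_, fun F hF hFe => ?_⟩
  · obtain ⟨t₁, h₁⟩ := hpar
    obtain ⟨t₂, h₂⟩ := h.2.1
    rw [sum_insert ha] at h₂
    exact ⟨t₁ + t₂ - x₀ - x a, by linarith⟩
  · have := hd_lo _ (mem_union_right _ (mem_image_of_mem _ (mem_filter.mpr
      ⟨mem_powerset.mpr hF, hFo⟩)))
    linarith
  · have := hd_up _ (mem_union_right _ (mem_image_of_mem _ (mem_filter.mpr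
      ⟨mem_powerset.mpr hF, hFe⟩)))
    linarith

/-- `D` is the column `∗`: each row `T j` together with `∗` has even size. -/
theorem ParityFeasible.exists_rows [Fintype κ] [DecidableEq κ] {D : Finset κ}
    (h : ParityFeasible (Fintype.card κ) #D x s) :
    ∃ T : κ → Finset ι, (∀ j, T j ⊆ s) ∧ (∀ i ∈ s, (#{j | i ∈ T j} : ℤ) = x i) ∧
      ∀ j, (Odd #(T j) ↔ j ∈ D) := by
  induction s using Finset.induction_on generalizing D with
  | empty =>
    have hD : D = ∅ := by
      have := h.2.2.2 ∅ (empty_subset _) (by simp)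
      simp only [sum_empty, card_empty] at this
      exact card_eq_zero.mp (by omega)
    exact ⟨fun _ => ∅, fun _ => subset_refl _, by simp, by simp [hD]⟩
  | insert a s ha ih =>
    obtain ⟨d, hpar, h₁, h₂, h₃, h₄, hd⟩ :=
      h.exists_merge ha (by positivity) (by exact_mod_cast card_le_univ D)
    obtain ⟨B, hB, hBd⟩ := exists_card_eq_card_symmDiff_eq D hpar h₁ h₂ h₃ h₄
    obtain ⟨T, hTs, hTcol, hTrow⟩ := ih (D := D ∆ B) (hBd ▸ hd)
    have haT : ∀ j, a ∉ T j := fun j h => ha (hTs j h)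
    refine ⟨fun j => if j ∈ B then insert a (T j) else T j, fun j => ?_, fun i hi => ?_,
      fun j => ?_⟩
    · dsimp only
      split_ifs
      · exact insert_subset_insert a (hTs j)
      · exact (hTs j).trans (subset_insert a s)
    · rcases mem_insert.mp hi with rfl | hi
      · convert hB using 3
        ext j
        by_cases hj : j ∈ B <;> simp [hj, haT]
      · have hia : i ≠ a := fun h => ha (h ▸ hi)
        convert hTcol i hi using 3
        ext j
        by_cases hj : j ∈ B <;> simp [hj, hia]
    · have := hTrow j
      by_cases hjB : j ∈ B <;>
        simp only [hjB, if_true, if_false, card_insert_of_notMem (haT j), Nat.odd_add_one,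
          mem_symmDiff] at this ⊢ <;> tauto

end EvenRows

section Cycle

open SimpleGraph

variable (m : ℕ)

lemma cycleGraph_adj_add_one (i : Fin (m + 3)) : (cycleGraph (m + 3)).Adj i (i + 1) :=
  cycleGraph_adj.mpr (Or.inr (add_sub_cancel_left i 1))

def cycleEdge (i : Fin (m + 3)) : (cycleGraph (m + 3)).edgeSet :=
  ⟨s(i, i + 1), cycleGraph_adj_add_one m i⟩

lemma cycleEdge_surjective : Function.Surjective (cycleEdge m) := by
  rintro ⟨e, he⟩
  induction e using Sym2.ind with
  | _ u v =>
    rw [mem_edgeSet] at he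
    rcases cycleGraph_adj.mp he with h | h <;> rw [sub_eq_iff_eq_add'] at h <;> subst h
    · exact ⟨v, Subtype.ext Sym2.eq_swap⟩
    · exact ⟨u, rfl⟩

/-- Prefix sums of `f`; they close up around the cycle because `∑ f = 0`. -/
lemma exists_cycle_potential (f : Fin (m + 3) → ZMod 2) (hf : ∑ i, f i = 0) :
    ∃ g : Fin (m + 3) → ZMod 2, ∀ i, g i + g (i + 1) = f i := by
  let f' : ℕ → ZMod 2 := fun j => if h : j < m + 3 then f ⟨j, h⟩ else 0
  have hf' : ∀ i : Fin (m + 3), f' i = f i := fun i => dif_pos i.2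
  have hchar : ∀ a c : ZMod 2, a + (a + c) = c := by decide
  refine ⟨fun v => ∑ j ∈ range v, f' j, fun i => ?_⟩
  rcases Fin.eq_castSucc_or_eq_last i with ⟨i, rfl⟩ | rfl
  · simp only [Fin.coeSucc_eq_succ, Fin.val_succ, sum_range_succ, Fin.val_castSucc, hchar]
    exact hf' i.castSucc
  · have htot : ∑ j ∈ range (m + 3), f' j = 0 := by
      rw [← Fin.sum_univ_eq_sum_range, ← hf]
      exact sum_congr rfl fun i _ => hf' i
    rw [sum_range_succ, show f' (m + 2) = f (Fin.last _) from hf' (Fin.last _)] at htot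
    simp only [Fin.last_add_one, Fin.val_last, Fin.val_zero, range_zero, sum_empty, add_zero]
    rw [eq_neg_of_add_eq_zero_left htot, ZMod.neg_eq_self_mod_two]

lemma even_sum_cutVec_cycle (A : Set (Fin (m + 3))) : Even (∑ i, cutVec A s(i, i + 1)) := by
  classical
  rw [← ZMod.intCast_eq_zero_iff_even]
  push_cast
  simp only [cutVec_cast_zmod, sum_add_distrib]
  rw [Fintype.sum_equiv (Equiv.addRight 1) (fun i => if i + 1 ∈ A then (1 : ZMod 2) else 0)
    (fun i => if i ∈ A then 1 else 0) fun _ => rfl]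
  exact CharTwo.add_self_eq_zero _

lemma exists_cutVec_cycle_eq (T : Finset (Fin (m + 3))) (hT : Even #T) :
    ∃ A : Set (Fin (m + 3)), ∀ i, cutVec A s(i, i + 1) = if i ∈ T then 1 else 0 := by
  obtain ⟨g, hg⟩ := exists_cycle_potential m (fun i => if i ∈ T then 1 else 0) (by
    rw [sum_boole, filter_univ_mem]
    exact ZMod.natCast_eq_zero_iff_even.mpr hT)
  refine ⟨{x | g x = 1}, fun i => ?_⟩
  rw [cutVec_setOf_eq_one, hg]
  split_ifs <;> rfl

lemma even_sum_cycleEdge_of_mem_cutGroup {p : ((cycleGraph (m + 3)).edgeSet → ℤ) × ℤ}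
    (hp : p ∈ cutGroup (cycleGraph (m + 3))) : Even (∑ i, p.1 (cycleEdge m i)) := by
  induction hp using AddSubgroup.closure_induction with
  | mem g hg =>
    obtain ⟨A, rfl⟩ := hg
    exact even_sum_cutVec_cycle m A
  | zero => simp
  | add q r _ _ hq hr => simpa [sum_add_distrib] using hq.add hr
  | neg q _ hq => simpa using hq.neg

def cycleOddForm (F : Finset (Fin (m + 3))) : ((cycleGraph (m + 3)).edgeSet → ℤ) × ℤ →+ ℤ :=
  AddMonoidHom.mk' (fun p => ∑ i, p.1 (cycleEdge m i) + ((#F : ℤ) - 1) * p.2 -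
    2 * ∑ i ∈ F, p.1 (cycleEdge m i)) fun p q => by
      simp only [Prod.fst_add, Prod.snd_add, Pi.add_apply, sum_add_distrib]
      ring

def cycleForms : Set (((cycleGraph (m + 3)).edgeSet → ℤ) × ℤ →+ ℤ) :=
  boxForms _ ∪ cycleOddForm m '' {F | Odd #F}

lemma cycleForms_nonneg_of_mem_cutGens {g : ((cycleGraph (m + 3)).edgeSet → ℤ) × ℤ}
    (hg : g ∈ cutGens _) : ∀ φ ∈ cycleForms m, 0 ≤ φ g := by
  rintro φ (hφ | ⟨F, hF, rfl⟩)
  · exact boxForms_nonneg_of_mem_cutGens hg φ hφ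
  obtain ⟨A, rfl⟩ := hg
  have := two_mul_sum_le_of_odd (y := fun i => cutVec A s(i, i + 1))
    (fun i => by have := cutVec_nonneg A s(i, i + 1); have := cutVec_le_one A s(i, i + 1); omega)
    (even_sum_cutVec_cycle m A) hF
  simp only [cycleOddForm, AddMonoidHom.mk'_apply, cycleEdge]
  linarith

lemma parityFeasible_of_forall_cycleForms_nonneg {p : ((cycleGraph (m + 3)).edgeSet → ℤ) × ℤ}
    (hpar : Even (∑ i, p.1 (cycleEdge m i))) (hp : ∀ φ ∈ cycleForms m, 0 ≤ φ p) :
    0 ≤ p.2 ∧ ParityFeasible p.2 0 (fun i => p.1 (cycleEdge m i)) univ := by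
  obtain ⟨h₂, h₁⟩ := forall_boxForms_nonneg_iff.mp fun φ hφ => hp φ (Or.inl hφ)
  refine ⟨h₂, fun i _ => h₁ _, by simpa using hpar, fun F _ hF => ?_, fun F _ _ => ?_⟩
  · have := hp _ (Or.inr ⟨F, hF, rfl⟩)
    simp only [cycleOddForm, AddMonoidHom.mk'_apply] at this
    linarith
  · have := sum_le_sum_of_subset_of_nonneg (subset_univ F) fun i _ _ => (h₁ (cycleEdge m i)).1
    have := sum_le_card_nsmul F _ _ fun i _ => (h₁ (cycleEdge m i)).2
    simp only [nsmul_eq_mul] at this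
    linarith

lemma mem_cutMonoid_cycle {p : ((cycleGraph (m + 3)).edgeSet → ℤ) × ℤ} (h₂ : 0 ≤ p.2)
    (h : ParityFeasible p.2 0 (fun i => p.1 (cycleEdge m i)) univ) :
    p ∈ cutMonoid (cycleGraph (m + 3)) := by
  lift p.2 to ℕ using h₂ with k hk
  obtain ⟨T, -, hTcol, hTrow⟩ :=
    ParityFeasible.exists_rows (κ := Fin k) (D := ∅) (by simpa using h)
  choose A hA using fun j => exists_cutVec_cycle_eq m (T j)
    (Nat.not_odd_iff_even.mp fun h => by simpa using (hTrow j).mp h)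
  refine mem_cutMonoid_of_eq_sum A (fun e => ?_) (by simp [hk])
  obtain ⟨i, rfl⟩ := cycleEdge_surjective m e
  rw [← hTcol i (mem_univ i)]
  simp [cycleEdge, hA, sum_boole]

theorem cycleGraph_cutNormal : CutNormal (cycleGraph (m + 3)) :=
  cutNormal_of_forms (cycleForms m) (fun φ hφ _ hg => cycleForms_nonneg_of_mem_cutGens m hg φ hφ)
    fun _ hp hΦ =>
      let ⟨h₂, h⟩ := parityFeasible_of_forall_cycleForms_nonneg m
        (even_sum_cycleEdge_of_mem_cutGroup m hp) hΦ
      mem_cutMonoid_cycle m h₂ h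

end Cycle

/-- The cut monoid of every (finite) tree and of every cycle `Cₙ`
(`n ≥ 3`) is normal. -/
theorem tree_cycle_cutNormal :
    (∀ {V : Type} [Fintype V] (T : SimpleGraph V),
      T.Connected → T.IsAcyclic → CutNormal T) ∧
    (∀ n : ℕ, 3 ≤ n → CutNormal (SimpleGraph.cycleGraph n)) := by
  refine ⟨fun T hc ha => ha.cutNormal hc, fun n hn => ?_⟩
  obtain ⟨m, rfl⟩ := Nat.exists_eq_add_of_le' hn
  exact cycleGraph_cutNormal m
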